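/- Let x_1 ≤ ... ≤ x_ω be real numbers in [0,1], let m = x_⌈ω/2⌉, Δ = max_{z∈[0,1]} Σ_j |z - x_j|, δ = Σ_j |m - x_j|. If Δ > δ, then the satisfaction at 1/2, namely 1 - (Σ_j |1/2 - x_j| - δ)/(Δ - δ), is at least 1/2. -/

import Mathlib

/-!
The sum of distances `f z = ∑ j, |z - x j|` is convex, and `1/2` is the midpoint of `m` and its
reflection `1 - m ∈ [0, 1]`. Hence `f (1/2) ≤ (f m + f (1 - m)) / 2 ≤ (δ + Δ) / 2`, i.e. the excess
`f (1/2) - δ` is at most half of `Δ - δ`.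
-/

lemma sum_abs_midpoint_sub_le {ι : Type*} (s : Finset ι) (x : ι → ℝ) (a b : ℝ) :
    ∑ j ∈ s, |(a + b) / 2 - x j| ≤ (∑ j ∈ s, |a - x j| + ∑ j ∈ s, |b - x j|) / 2 := by
  rw [← Finset.sum_add_distrib, Finset.sum_div]
  refine Finset.sum_le_sum fun j _ => ?_
  calc |(a + b) / 2 - x j| = |(a - x j) + (b - x j)| / 2 := by
        rw [← abs_two, ← abs_div, abs_two]; ring_nf
    _ ≤ (|a - x j| + |b - x j|) / 2 := by gcongr; exact abs_add_le _ _

theorem stmt_5 (ω : ℕ) (x : Fin (ω + 1) → ℝ)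
    (hx : ∀ j, x j ∈ Set.Icc (0 : ℝ) 1)
    (m : ℝ) (hm : m = x ⟨ω / 2, by omega⟩)
    (Δ : ℝ) (hΔ : IsGreatest ((fun z => ∑ j, |z - x j|) '' Set.Icc (0 : ℝ) 1) Δ)
    (δ : ℝ) (hδ : δ = ∑ j, |m - x j|)
    (hgt : Δ > δ) :
    1 - (∑ j, |1 / 2 - x j| - δ) / (Δ - δ) ≥ 1 / 2 := by
  obtain ⟨hm0, hm1⟩ : m ∈ Set.Icc (0 : ℝ) 1 := hm ▸ hx _
  have hreflect : ∑ j, |(1 - m) - x j| ≤ Δ :=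
    hΔ.2 ⟨1 - m, ⟨by linarith, by linarith⟩, rfl⟩
  have hmid : ∑ j, |1 / 2 - x j| ≤ (δ + Δ) / 2 := by
    have := sum_abs_midpoint_sub_le Finset.univ x m (1 - m)
    rw [show (m + (1 - m)) / 2 = 1 / 2 by ring, ← hδ] at this
    linarith
  rw [ge_iff_le, le_sub_comm, div_le_iff₀ (sub_pos.mpr hgt)]
  linarith
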